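/- arXiv:2202.13095 — 8 statements merged into one kernel-verified Lean document; each statement's English description precedes it below -/
import Mathlib

section
/- Let E be a complex Banach algebra, n₀ a positive integer, L a constant with 0 < L < 1, and φ : E × E → [0,∞) a function satisfying φ(2x, 2y) ≤ 2L·φ(x, y) for all x, y ∈ E. Suppose f : E → E satisfies f(0) = 0, ‖D_λ f(x,y)‖ ≤ φ(x,y) for all x, y ∈ E and all λ ∈ T¹_{1/n₀}, ‖f(xy) − f(y)f(x)‖ ≤ φ(x,y) for all x, y ∈ E, and for every x ∈ E the limits below exist and satisfy lim_{m→∞} 2^{−m} f(2^m · lim_{n→∞} 2^{−n} f(2^n x)) = x. Then there exists a unique involution I : E → E satisfying ‖I(x) − f(x)‖ ≤ (L/(1−L))·φ(x, 0) for all x ∈ E; moreover I(x) = lim_{n→∞} 2^{−n} f(2^n x) for every x ∈ E. -/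
/-
Direct method. The approximants `A n x = 2⁻ⁿ f (2ⁿ x)` converge by hypothesis to a map `I`.
The Jensen inequality at `(2ⁿ⁺¹ x, 2ⁿ⁺¹ y)`, divided by `2ⁿ⁺¹`, bounds
`conj λ • A n (x + y) - A (n+1) (λ x) - A (n+1) (λ y)` by `Lⁿ⁺¹ φ x y`, so in the limit
`conj λ • I (x + y) = I (λ x) + I (λ y)`: `I` is additive and `I (λ x) = conj λ • I x` on the arc.
The scalars `c` with `I (c • x) = conj c • I x` form a subfield of `ℂ`; containing an arc, it
contains the unit circle, hence `[-1, 1]` (as `cos θ`), hence `ℝ` (by inversion), hence `ℂ`.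
Anti-multiplicativity comes the same way from `A (2n) (x y) ≈ A n y * A n x`, the bound
`L / (1 - L) φ x 0` from summing the geometric series of the steps `A n x - A (n+1) x`, and
uniqueness from `J x - I x = 2⁻ⁿ (J (2ⁿ x) - I (2ⁿ x)) = O(Lⁿ)`.
-/

open Filter Topology

/-- `D_λ f (x, y) = 2 conj(λ) f((x+y)/2) - f(λx) - f(λy)`. -/
noncomputable def jensenDiff {E : Type*} [NormedRing E] [NormedAlgebra ℂ E]
    (f : E → E) (l : ℂ) (x y : E) : E :=
  (2 * (starRingEnd ℂ) l) • f ((2 : ℂ)⁻¹ • (x + y)) - f (l • x) - f (l • y)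

/-- The arc `T¹_{1/n₀} = {e^{iθ} : 0 ≤ θ ≤ 1/n₀}` of the unit circle. -/
def unitArc (n₀ : ℕ) : Set ℂ :=
  {l : ℂ | ∃ θ : ℝ, 0 ≤ θ ∧ θ ≤ 1 / (n₀ : ℝ) ∧ l = Complex.exp (θ * Complex.I)}

/-- An involution on a complex algebra: conjugate-linear, anti-multiplicative,
and an involution of order two. -/
def IsInvolution {E : Type*} [NormedRing E] [NormedAlgebra ℂ E] (I : E → E) : Prop :=
  (∀ (x y : E) (l m : ℂ),
      I (l • x + m • y) = (starRingEnd ℂ) l • I x + (starRingEnd ℂ) m • I y) ∧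
  (∀ x y : E, I (x * y) = I y * I x) ∧
  (∀ x : E, I (I x) = x)

open ComplexConjugate

theorem eq_of_tendsto_of_norm_sub_le_geometric {G : Type*} [NormedAddCommGroup G]
    {u v : ℕ → G} {a b : G} {r C : ℝ} (hu : Tendsto u atTop (𝓝 a)) (hv : Tendsto v atTop (𝓝 b))
    (hr0 : 0 ≤ r) (hr1 : r < 1) (h : ∀ n, ‖u n - v n‖ ≤ r ^ n * C) : a = b := by
  have hC : Tendsto (fun n : ℕ => r ^ n * C) atTop (𝓝 0) := by
    simpa using (tendsto_pow_atTop_nhds_zero_of_lt_one hr0 hr1).mul_const C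
  exact sub_eq_zero.mp (tendsto_nhds_unique (hu.sub hv) (squeeze_zero_norm h hC))

theorem Subfield.exp_mem_of_unitArc_subset {K : Subfield ℂ} {n₀ : ℕ} (hn₀ : 0 < n₀)
    (hK : unitArc n₀ ⊆ K) (θ : ℝ) : Complex.exp (θ * Complex.I) ∈ K := by
  have hexp_nonneg : ∀ θ : ℝ, 0 ≤ θ → Complex.exp (θ * Complex.I) ∈ K := by
    intro θ hθ
    set m : ℕ := ⌈θ * n₀⌉₊ + 1
    have hm : (0 : ℝ) < m := by positivity
    have hsmall : θ / m ∈ Set.Icc 0 (1 / (n₀ : ℝ)) := by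
      refine ⟨by positivity, ?_⟩
      rw [div_le_div_iff₀ hm (by exact_mod_cast hn₀), one_mul]
      have := Nat.le_ceil (θ * n₀)
      simp only [m, Nat.cast_add, Nat.cast_one]
      linarith
    have hpow : Complex.exp (θ * Complex.I) = Complex.exp (↑(θ / m) * Complex.I) ^ m := by
      rw [← Complex.exp_nat_mul]
      congr 1
      have : (m : ℂ) ≠ 0 := by exact_mod_cast hm.ne'
      push_cast
      field_simp
    rw [hpow]
    exact pow_mem (hK ⟨θ / m, hsmall.1, hsmall.2, rfl⟩) m
  rcases le_or_gt 0 θ with hθ | hθ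
  · exact hexp_nonneg θ hθ
  · have hinv := inv_mem (hexp_nonneg (-θ) (by linarith))
    rwa [← Complex.exp_neg, Complex.ofReal_neg, neg_mul, neg_neg] at hinv

theorem Subfield.eq_top_of_exp_mem {K : Subfield ℂ}
    (hexp : ∀ θ : ℝ, Complex.exp (θ * Complex.I) ∈ K) : K = ⊤ := by
  have hreal_unit : ∀ t : ℝ, |t| ≤ 1 → (t : ℂ) ∈ K := by
    intro t ht
    rw [abs_le] at ht
    have hcos : (t : ℂ) = (Complex.exp (↑(Real.arccos t) * Complex.I)
        + Complex.exp (↑(-Real.arccos t) * Complex.I)) / 2 := by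
      rw [Complex.ofReal_neg, neg_mul, ← neg_mul, ← Complex.two_cos, ← Complex.ofReal_cos,
        Real.cos_arccos ht.1 ht.2]
      ring
    rw [hcos]
    exact div_mem (add_mem (hexp _) (hexp _)) (ofNat_mem K 2)
  have hreal : ∀ t : ℝ, (t : ℂ) ∈ K := by
    intro t
    rcases le_or_gt |t| 1 with ht | ht
    · exact hreal_unit t ht
    · have hinv := inv_mem (hreal_unit t⁻¹ (by rw [abs_inv]; exact inv_le_one_of_one_le₀ ht.le))
      rwa [Complex.ofReal_inv, inv_inv] at hinv
  refine eq_top_iff.mpr fun c _ => ?_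
  rw [← Complex.norm_mul_exp_arg_mul_I c]
  exact mul_mem (hreal _) (hexp _)

section Module

variable {E F : Type*} [AddCommGroup E] [Module ℂ E] [AddCommGroup F] [Module ℂ F]

def conjSMulSubfield (I : E →+ F) : Subfield ℂ where
  carrier := {c | ∀ x, I (c • x) = conj c • I x}
  mul_mem' {a b} ha hb x := by rw [mul_smul, ha, hb, map_mul, mul_smul]
  one_mem' x := by simp
  add_mem' {a b} ha hb x := by rw [add_smul, map_add, ha, hb, map_add, add_smul]
  zero_mem' x := by simp
  neg_mem' {a} ha x := by rw [neg_smul, map_neg, ha, map_neg, neg_smul]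
  inv_mem' a ha x := by
    rcases eq_or_ne a 0 with rfl | ha0
    · simp
    · have h := ha (a⁻¹ • x)
      rw [smul_inv_smul₀ ha0] at h
      rw [h, map_inv₀, inv_smul_smul₀ ((map_ne_zero _).mpr ha0)]

theorem map_conj_smul_of_unitArc {n₀ : ℕ} (hn₀ : 0 < n₀) (I : E →+ F)
    (hI : ∀ l ∈ unitArc n₀, ∀ x, I (l • x) = conj l • I x) (c : ℂ) (x : E) :
    I (c • x) = conj c • I x := by
  have htop : conjSMulSubfield I = ⊤ :=
    Subfield.eq_top_of_exp_mem (Subfield.exp_mem_of_unitArc_subset hn₀ hI)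
  exact (htop ▸ Subfield.mem_top c : c ∈ conjSMulSubfield I) x

noncomputable def dyadicApprox (f : E → E) (n : ℕ) (x : E) : E :=
  ((2 : ℂ) ^ n)⁻¹ • f ((2 : ℂ) ^ n • x)

@[simp]
theorem dyadicApprox_zero_left (f : E → E) (x : E) : dyadicApprox f 0 x = f x := by
  simp [dyadicApprox]

theorem dyadicApprox_apply_zero {f : E → E} (hf0 : f 0 = 0) (n : ℕ) : dyadicApprox f n 0 = 0 := by
  simp [dyadicApprox, hf0]

theorem apply_two_pow_smul_le {φ : E → E → ℝ} {L : ℝ} (hL0 : 0 ≤ L)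
    (hφ : ∀ x y : E, φ ((2 : ℂ) • x) ((2 : ℂ) • y) ≤ 2 * L * φ x y) (n : ℕ) (x y : E) :
    φ ((2 : ℂ) ^ n • x) ((2 : ℂ) ^ n • y) ≤ (2 * L) ^ n * φ x y := by
  induction n generalizing x y with
  | zero => simp
  | succ n ih =>
    rw [pow_succ', mul_smul, mul_smul, pow_succ', mul_assoc]
    exact (hφ _ _).trans (mul_le_mul_of_nonneg_left (ih x y) (by positivity))

end Module

section NormedAlgebra

variable {E : Type*} [NormedRing E] [NormedAlgebra ℂ E] {f : E → E} {φ : E → E → ℝ} {L : ℝ}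

theorem norm_conj_smul_dyadicApprox_sub_le {l : ℂ} (hL0 : 0 ≤ L)
    (hφ : ∀ x y : E, φ ((2 : ℂ) • x) ((2 : ℂ) • y) ≤ 2 * L * φ x y)
    (hD : ∀ x y : E, ‖jensenDiff f l x y‖ ≤ φ x y) (n : ℕ) (x y : E) :
    ‖conj l • dyadicApprox f n (x + y) - dyadicApprox f (n + 1) (l • x)
      - dyadicApprox f (n + 1) (l • y)‖ ≤ L ^ (n + 1) * φ x y := by
  have hscale : conj l • dyadicApprox f n (x + y) - dyadicApprox f (n + 1) (l • x)
      - dyadicApprox f (n + 1) (l • y)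
      = ((2 : ℂ) ^ (n + 1))⁻¹ • jensenDiff f l ((2 : ℂ) ^ (n + 1) • x) ((2 : ℂ) ^ (n + 1) • y) := by
    have hmid : (2 : ℂ)⁻¹ • ((2 : ℂ) ^ (n + 1) • x + (2 : ℂ) ^ (n + 1) • y)
        = (2 : ℂ) ^ n • (x + y) := by
      module
    simp only [jensenDiff, dyadicApprox, hmid, smul_comm l ((2 : ℂ) ^ (n + 1))]
    module
  rw [hscale, norm_smul, norm_inv, norm_pow, Complex.norm_ofNat]
  calc (2 ^ (n + 1))⁻¹ * ‖jensenDiff f l ((2 : ℂ) ^ (n + 1) • x) ((2 : ℂ) ^ (n + 1) • y)‖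
      ≤ (2 ^ (n + 1))⁻¹ * ((2 * L) ^ (n + 1) * φ x y) := by
        gcongr
        exact (hD _ _).trans (apply_two_pow_smul_le hL0 hφ _ _ _)
    _ = L ^ (n + 1) * φ x y := by
        rw [mul_pow]
        field_simp

theorem norm_dyadicApprox_sub_succ_le (hf0 : f 0 = 0) (hL0 : 0 ≤ L)
    (hφ : ∀ x y : E, φ ((2 : ℂ) • x) ((2 : ℂ) • y) ≤ 2 * L * φ x y)
    (hD : ∀ x y : E, ‖jensenDiff f 1 x y‖ ≤ φ x y) (n : ℕ) (x : E) :
    ‖dyadicApprox f n x - dyadicApprox f (n + 1) x‖ ≤ L ^ (n + 1) * φ x 0 := by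
  simpa [dyadicApprox_apply_zero hf0] using norm_conj_smul_dyadicApprox_sub_le hL0 hφ hD n x 0

theorem norm_dyadicApprox_mul_sub_le (hL0 : 0 ≤ L)
    (hφ : ∀ x y : E, φ ((2 : ℂ) • x) ((2 : ℂ) • y) ≤ 2 * L * φ x y)
    (hmul : ∀ x y : E, ‖f (x * y) - f y * f x‖ ≤ φ x y) (n : ℕ) (x y : E) :
    ‖dyadicApprox f (2 * n) (x * y) - dyadicApprox f n y * dyadicApprox f n x‖
      ≤ (L / 2) ^ n * φ x y := by
  have hscale : dyadicApprox f (2 * n) (x * y) - dyadicApprox f n y * dyadicApprox f n x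
      = ((2 : ℂ) ^ (2 * n))⁻¹ • (f ((2 : ℂ) ^ n • x * (2 : ℂ) ^ n • y)
          - f ((2 : ℂ) ^ n • y) * f ((2 : ℂ) ^ n • x)) := by
    rw [dyadicApprox, dyadicApprox, dyadicApprox, smul_mul_smul_comm, smul_mul_smul_comm,
      ← mul_inv, ← pow_add, ← two_mul, smul_sub]
  rw [hscale, norm_smul, norm_inv, norm_pow, Complex.norm_ofNat]
  calc (2 ^ (2 * n))⁻¹ * ‖f ((2 : ℂ) ^ n • x * (2 : ℂ) ^ n • y)
        - f ((2 : ℂ) ^ n • y) * f ((2 : ℂ) ^ n • x)‖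
      ≤ (2 ^ (2 * n))⁻¹ * ((2 * L) ^ n * φ x y) := by
        gcongr
        exact (hmul _ _).trans (apply_two_pow_smul_le hL0 hφ _ _ _)
    _ = (L / 2) ^ n * φ x y := by
        rw [pow_mul, ← inv_pow, ← mul_assoc, ← mul_pow]
        ring

theorem map_zero_of_tendsto_dyadicApprox {I : E → E}
    (hI : ∀ x, Tendsto (fun n => dyadicApprox f n x) atTop (𝓝 (I x))) (hf0 : f 0 = 0) :
    I 0 = 0 :=
  tendsto_nhds_unique (hI 0) (by simp only [dyadicApprox_apply_zero hf0, tendsto_const_nhds])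

theorem conj_smul_map_add_of_tendsto_dyadicApprox {I : E → E}
    (hI : ∀ x, Tendsto (fun n => dyadicApprox f n x) atTop (𝓝 (I x))) {l : ℂ} (hL0 : 0 ≤ L)
    (hL1 : L < 1) (hφ : ∀ x y : E, φ ((2 : ℂ) • x) ((2 : ℂ) • y) ≤ 2 * L * φ x y)
    (hD : ∀ x y : E, ‖jensenDiff f l x y‖ ≤ φ x y) (x y : E) :
    conj l • I (x + y) = I (l • x) + I (l • y) := by
  have hshift (z : E) : Tendsto (fun n => dyadicApprox f (n + 1) z) atTop (𝓝 (I z)) :=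
    (hI z).comp (tendsto_add_atTop_nat 1)
  refine eq_of_tendsto_of_norm_sub_le_geometric ((hI (x + y)).const_smul (conj l))
    ((hshift (l • x)).add (hshift (l • y))) hL0 hL1 (C := L * φ x y) fun n => ?_
  rw [← sub_sub, ← mul_assoc, ← pow_succ]
  exact norm_conj_smul_dyadicApprox_sub_le hL0 hφ hD n x y

theorem map_mul_of_tendsto_dyadicApprox {I : E → E}
    (hI : ∀ x, Tendsto (fun n => dyadicApprox f n x) atTop (𝓝 (I x))) (hL0 : 0 ≤ L)
    (hL1 : L < 1) (hφ : ∀ x y : E, φ ((2 : ℂ) • x) ((2 : ℂ) • y) ≤ 2 * L * φ x y)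
    (hmul : ∀ x y : E, ‖f (x * y) - f y * f x‖ ≤ φ x y) (x y : E) :
    I (x * y) = I y * I x := by
  have htwice : Tendsto (fun n : ℕ => 2 * n) atTop atTop :=
    tendsto_id.const_mul_atTop' two_pos
  exact eq_of_tendsto_of_norm_sub_le_geometric ((hI (x * y)).comp htwice) ((hI y).mul (hI x))
    (by positivity) (by linarith) (norm_dyadicApprox_mul_sub_le hL0 hφ hmul · x y)

theorem norm_sub_le_of_tendsto_dyadicApprox {I : E → E}
    (hI : ∀ x, Tendsto (fun n => dyadicApprox f n x) atTop (𝓝 (I x))) (hf0 : f 0 = 0)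
    (hL0 : 0 ≤ L) (hL1 : L < 1)
    (hφ : ∀ x y : E, φ ((2 : ℂ) • x) ((2 : ℂ) • y) ≤ 2 * L * φ x y)
    (hD : ∀ x y : E, ‖jensenDiff f 1 x y‖ ≤ φ x y) (x : E) :
    ‖I x - f x‖ ≤ L / (1 - L) * φ x 0 := by
  have hstep (n : ℕ) :
      dist (dyadicApprox f n x) (dyadicApprox f (n + 1) x) ≤ L * φ x 0 * L ^ n := by
    rw [dist_eq_norm, mul_right_comm, ← pow_succ']
    exact norm_dyadicApprox_sub_succ_le hf0 hL0 hφ hD n x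
  have h := dist_le_of_le_geometric_of_tendsto₀ L _ hL1 hstep (hI x)
  rw [dist_comm, dist_eq_norm, dyadicApprox_zero_left] at h
  rwa [div_mul_eq_mul_div]

theorem IsInvolution.map_smul {I : E → E} (hI : IsInvolution I) (c : ℂ) (x : E) :
    I (c • x) = conj c • I x := by
  simpa using hI.1 x 0 c 0

theorem IsInvolution.eq_of_norm_sub_le {I J : E → E} (hI : IsInvolution I) (hJ : IsInvolution J)
    {K : ℝ} (hK : 0 ≤ K) (hL0 : 0 ≤ L) (hL1 : L < 1)
    (hφ : ∀ x y : E, φ ((2 : ℂ) • x) ((2 : ℂ) • y) ≤ 2 * L * φ x y)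
    (hIf : ∀ x, ‖I x - f x‖ ≤ K * φ x 0) (hJf : ∀ x, ‖J x - f x‖ ≤ K * φ x 0) : I = J := by
  funext x
  refine eq_of_tendsto_of_norm_sub_le_geometric tendsto_const_nhds tendsto_const_nhds hL0 hL1
    (C := 2 * K * φ x 0) fun n => ?_
  have hscale : I x - J x = ((2 : ℂ) ^ n)⁻¹ • (I ((2 : ℂ) ^ n • x) - J ((2 : ℂ) ^ n • x)) := by
    rw [hI.map_smul, hJ.map_smul, map_pow, map_ofNat, ← smul_sub, inv_smul_smul₀ (by simp)]
  have hfar : ‖I ((2 : ℂ) ^ n • x) - J ((2 : ℂ) ^ n • x)‖ ≤ 2 * K * ((2 * L) ^ n * φ x 0) := by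
    have hφn := apply_two_pow_smul_le hL0 hφ n x 0
    rw [smul_zero] at hφn
    calc ‖I ((2 : ℂ) ^ n • x) - J ((2 : ℂ) ^ n • x)‖
        ≤ ‖I ((2 : ℂ) ^ n • x) - f ((2 : ℂ) ^ n • x)‖
          + ‖J ((2 : ℂ) ^ n • x) - f ((2 : ℂ) ^ n • x)‖ := by
          simpa only [dist_eq_norm] using dist_triangle_right _ _ (f ((2 : ℂ) ^ n • x))
      _ ≤ 2 * K * φ ((2 : ℂ) ^ n • x) 0 := by
          linarith [hIf ((2 : ℂ) ^ n • x), hJf ((2 : ℂ) ^ n • x)]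
      _ ≤ 2 * K * ((2 * L) ^ n * φ x 0) := by gcongr
  rw [hscale, norm_smul, norm_inv, norm_pow, Complex.norm_ofNat]
  calc (2 ^ n)⁻¹ * ‖I ((2 : ℂ) ^ n • x) - J ((2 : ℂ) ^ n • x)‖
      ≤ (2 ^ n)⁻¹ * (2 * K * ((2 * L) ^ n * φ x 0)) := by gcongr
    _ = L ^ n * (2 * K * φ x 0) := by
        rw [mul_pow]
        field_simp

end NormedAlgebra

theorem stability_involution_direct_general {E : Type*} [NormedRing E] [NormedAlgebra ℂ E]
    (n₀ : ℕ) (hn₀ : 0 < n₀) (L : ℝ) (hL0 : 0 < L) (hL1 : L < 1)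
    (φ : E → E → ℝ)
    (hφ : ∀ x y : E, φ ((2 : ℂ) • x) ((2 : ℂ) • y) ≤ 2 * L * φ x y)
    (f : E → E) (hf0 : f 0 = 0)
    (hD : ∀ x y : E, ∀ l ∈ unitArc n₀, ‖jensenDiff f l x y‖ ≤ φ x y)
    (hmul : ∀ x y : E, ‖f (x * y) - f y * f x‖ ≤ φ x y)
    (hlim : ∀ x : E, ∃ y : E,
      Tendsto (fun n : ℕ => ((2 : ℂ) ^ n)⁻¹ • f ((2 : ℂ) ^ n • x)) atTop (𝓝 y) ∧
      Tendsto (fun m : ℕ => ((2 : ℂ) ^ m)⁻¹ • f ((2 : ℂ) ^ m • y)) atTop (𝓝 x)) :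
    ∃ I : E → E, IsInvolution I ∧
      (∀ x : E, ‖I x - f x‖ ≤ L / (1 - L) * φ x 0) ∧
      (∀ x : E,
        Tendsto (fun n : ℕ => ((2 : ℂ) ^ n)⁻¹ • f ((2 : ℂ) ^ n • x)) atTop (𝓝 (I x))) ∧
      (∀ J : E → E, IsInvolution J →
        (∀ x : E, ‖J x - f x‖ ≤ L / (1 - L) * φ x 0) → J = I) := by
  choose I hI hII using hlim
  have hD1 := fun x y => hD x y 1 ⟨0, le_rfl, by positivity, by simp⟩
  have hadd (x y : E) : I (x + y) = I x + I y := by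
    simpa using conj_smul_map_add_of_tendsto_dyadicApprox hI hL0.le hL1 hφ hD1 x y
  have hsmul : ∀ (c : ℂ) (x : E), I (c • x) = conj c • I x :=
    map_conj_smul_of_unitArc hn₀ (AddMonoidHom.mk' I hadd) fun l hl x => by
      simpa [map_zero_of_tendsto_dyadicApprox hI hf0] using
        (conj_smul_map_add_of_tendsto_dyadicApprox hI hL0.le hL1 hφ (hD · · l hl) x 0).symm
  have hInv : IsInvolution I :=
    ⟨fun x y l m => by rw [hadd, hsmul, hsmul],
      map_mul_of_tendsto_dyadicApprox hI hL0.le hL1 hφ hmul,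
      fun x => tendsto_nhds_unique (hI (I x)) (hII x)⟩
  have hbound := norm_sub_le_of_tendsto_dyadicApprox hI hf0 hL0.le hL1 hφ hD1
  refine ⟨I, hInv, hbound, hI, fun J hJ hJf => ?_⟩
  exact hJ.eq_of_norm_sub_le hInv (div_nonneg hL0.le (by linarith)) hL0.le hL1 hφ hJf hbound

theorem stability_involution_direct {E : Type*} [NormedRing E] [NormedAlgebra ℂ E] [CompleteSpace E]
    (n₀ : ℕ) (hn₀ : 0 < n₀) (L : ℝ) (hL0 : 0 < L) (hL1 : L < 1)
    (φ : E → E → ℝ) (hφ0 : ∀ x y : E, 0 ≤ φ x y)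
    (hφ : ∀ x y : E, φ ((2 : ℂ) • x) ((2 : ℂ) • y) ≤ 2 * L * φ x y)
    (f : E → E) (hf0 : f 0 = 0)
    (hD : ∀ x y : E, ∀ l ∈ unitArc n₀, ‖jensenDiff f l x y‖ ≤ φ x y)
    (hmul : ∀ x y : E, ‖f (x * y) - f y * f x‖ ≤ φ x y)
    (hlim : ∀ x : E, ∃ y : E,
      Tendsto (fun n : ℕ => ((2 : ℂ) ^ n)⁻¹ • f ((2 : ℂ) ^ n • x)) atTop (𝓝 y) ∧
      Tendsto (fun m : ℕ => ((2 : ℂ) ^ m)⁻¹ • f ((2 : ℂ) ^ m • y)) atTop (𝓝 x)) :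
    ∃ I : E → E, IsInvolution I ∧
      (∀ x : E, ‖I x - f x‖ ≤ L / (1 - L) * φ x 0) ∧
      (∀ x : E,
        Tendsto (fun n : ℕ => ((2 : ℂ) ^ n)⁻¹ • f ((2 : ℂ) ^ n • x)) atTop (𝓝 (I x))) ∧
      (∀ J : E → E, IsInvolution J →
        (∀ x : E, ‖J x - f x‖ ≤ L / (1 - L) * φ x 0) → J = I) :=
  stability_involution_direct_general n₀ hn₀ L hL0 hL1 φ hφ f hf0 hD hmul hlim
end

section
/- Let E be a complex Banach algebra, n₀ a positive integer, r ∈ (0,1) and θ ∈ [0,∞). Suppose f : E → E satisfies f(0) = 0 and ‖D_λ f(x,y)‖ ≤ θ(‖x‖^r + ‖y‖^r) for all x, y ∈ E and all λ ∈ T¹_{1/n₀}, and that for each x ∈ E the limit I(x) = lim_{n→∞} 2^{−n} f(2^n x) exists. If in addition | ‖x · f(x)‖ − ‖x‖² | ≤ 2θ·‖x‖^r for all x ∈ E, then ‖x · I(x)‖ = ‖x‖² for all x ∈ E. -/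
open Filter Topology

/-!
Rescaling `x ↦ c⁻¹ • f (c • x)` multiplies the defect `‖x * f x‖ - ‖x‖ ^ 2` by `‖c‖⁻²` while
the bound `‖x‖ ^ r` grows only like `‖c‖ ^ r`. With `c = 2 ^ n` and `r < 2` the defect of the
`n`-th Hyers approximant of `I` is therefore `O((2 ^ (r - 2)) ^ n)`, and in the limit it vanishes.
-/

section Rescaling

variable {𝕜 E : Type*} [NormedField 𝕜] [NormedRing E] [NormedAlgebra 𝕜 E]

lemma norm_mul_smul_inv_apply_smul (g : E → E) (x : E) {c : 𝕜} (hc : c ≠ 0) :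
    ‖x * (c⁻¹ • g (c • x))‖ = ‖c‖⁻¹ ^ 2 * ‖(c • x) * g (c • x)‖ := by
  have hc' : ‖c‖ ≠ 0 := norm_ne_zero_iff.mpr hc
  rw [mul_smul_comm, smul_mul_assoc, norm_smul, norm_smul, norm_inv]
  field_simp

lemma abs_norm_mul_smul_inv_apply_smul_sub_le {g : E → E} {K r : ℝ}
    (hg : ∀ x : E, |‖x * g x‖ - ‖x‖ ^ 2| ≤ K * ‖x‖ ^ r) (x : E) {c : 𝕜} (hc : c ≠ 0) :
    |‖x * (c⁻¹ • g (c • x))‖ - ‖x‖ ^ 2| ≤ K * ‖x‖ ^ r * ‖c‖ ^ (r - 2) := by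
  have hc' : 0 < ‖c‖ := norm_pos_iff.mpr hc
  have hsq : ‖x‖ ^ 2 = ‖c‖⁻¹ ^ 2 * ‖c • x‖ ^ 2 := by
    rw [norm_smul, mul_pow, ← mul_assoc, ← mul_pow, inv_mul_cancel₀ hc'.ne', one_pow, one_mul]
  rw [norm_mul_smul_inv_apply_smul g x hc, hsq, ← mul_sub, abs_mul, abs_of_nonneg (by positivity)]
  calc ‖c‖⁻¹ ^ 2 * |‖(c • x) * g (c • x)‖ - ‖c • x‖ ^ 2|
      ≤ ‖c‖⁻¹ ^ 2 * (K * ‖c • x‖ ^ r) := by gcongr; exact hg _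
    _ = K * ‖x‖ ^ r * ‖c‖ ^ (r - 2) := by
      rw [norm_smul, Real.mul_rpow hc'.le (norm_nonneg x), Real.rpow_sub hc',
        Real.rpow_two, div_eq_mul_inv, inv_pow]
      ring

theorem norm_mul_eq_sq_of_tendsto_smul_inv_pow {g : E → E} {K r : ℝ} (hr : r < 2)
    (hg : ∀ x : E, |‖x * g x‖ - ‖x‖ ^ 2| ≤ K * ‖x‖ ^ r) {c : 𝕜} (hc : 1 < ‖c‖) {x y : E}
    (hy : Tendsto (fun n : ℕ => (c ^ n)⁻¹ • g (c ^ n • x)) atTop (𝓝 y)) :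
    ‖x * y‖ = ‖x‖ ^ 2 := by
  have hc0 : c ≠ 0 := norm_pos_iff.mp (one_pos.trans hc)
  have hgeom : Tendsto (fun n : ℕ => K * ‖x‖ ^ r * (‖c‖ ^ (r - 2)) ^ n) atTop (𝓝 0) := by
    simpa using (tendsto_pow_atTop_nhds_zero_of_lt_one (by positivity)
      (Real.rpow_lt_one_of_one_lt_of_neg hc (by linarith))).const_mul (K * ‖x‖ ^ r)
  have hdefect : Tendsto (fun n : ℕ => ‖x * ((c ^ n)⁻¹ • g (c ^ n • x))‖ - ‖x‖ ^ 2)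
      atTop (𝓝 0) := by
    refine squeeze_zero_norm (fun n => ?_) hgeom
    rw [Real.norm_eq_abs, Real.rpow_pow_comm (norm_nonneg c), ← norm_pow c n]
    exact abs_norm_mul_smul_inv_apply_smul_sub_le hg x (pow_ne_zero n hc0)
  exact tendsto_nhds_unique (hy.const_mul x).norm (tendsto_sub_nhds_zero_iff.mp hdefect)

end Rescaling

theorem cstar_identity_rpow_lt_one_general {E : Type*} [NormedRing E] [NormedAlgebra ℂ E]
    (r : ℝ) (hr1 : r < 1)
    (θ : ℝ)
    (f : E → E)
    (I : E → E)
    (hI : ∀ x : E,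
      Tendsto (fun n : ℕ => ((2 : ℂ) ^ n)⁻¹ • f ((2 : ℂ) ^ n • x)) atTop (𝓝 (I x)))
    (hC : ∀ x : E, |‖x * f x‖ - ‖x‖ ^ 2| ≤ 2 * θ * ‖x‖ ^ r) :
    ∀ x : E, ‖x * I x‖ = ‖x‖ ^ 2 := fun x =>
  norm_mul_eq_sq_of_tendsto_smul_inv_pow (hr1.trans one_lt_two) hC
    (by norm_num : 1 < ‖(2 : ℂ)‖) (hI x)

theorem cstar_identity_rpow_lt_one {E : Type*} [NormedRing E] [NormedAlgebra ℂ E] [CompleteSpace E]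
    (n₀ : ℕ) (hn₀ : 0 < n₀) (r : ℝ) (hr0 : 0 < r) (hr1 : r < 1)
    (θ : ℝ) (hθ : 0 ≤ θ)
    (f : E → E) (hf0 : f 0 = 0)
    (hD : ∀ x y : E, ∀ l ∈ unitArc n₀,
      ‖jensenDiff f l x y‖ ≤ θ * (‖x‖ ^ r + ‖y‖ ^ r))
    (I : E → E)
    (hI : ∀ x : E,
      Tendsto (fun n : ℕ => ((2 : ℂ) ^ n)⁻¹ • f ((2 : ℂ) ^ n • x)) atTop (𝓝 (I x)))
    (hC : ∀ x : E, |‖x * f x‖ - ‖x‖ ^ 2| ≤ 2 * θ * ‖x‖ ^ r) :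
    ∀ x : E, ‖x * I x‖ = ‖x‖ ^ 2 :=
  cstar_identity_rpow_lt_one_general r hr1 θ f I hI hC
end

section
/- Let E be a complex Banach algebra, n₀ a positive integer, r ∈ (0, 1/2) and θ ∈ [0,∞). Suppose f : E → E satisfies f(0) = 0, ‖D_λ f(x,y)‖ ≤ θ·‖x·y‖^r for all x, y ∈ E and all λ ∈ T¹_{1/n₀}, ‖f(xy) − f(y)f(x)‖ ≤ θ·‖x·y‖^r for all x, y ∈ E, and for every x ∈ E the limits below exist and satisfy lim_{m→∞} 2^{−m} f(2^m · lim_{n→∞} 2^{−n} f(2^n x)) = x. Then f itself is an involution on E. -/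
open Filter Topology

/-!
`T x = lim 2⁻ⁿ f (2ⁿ x)` exists by hypothesis, and the second limit condition says `T ∘ T = id`.
Rescaling the two approximate identities by `2ⁿ` (or `4ⁿ`) makes their errors decay geometrically,
since `4 ^ r < 2`: so `T` satisfies the Jensen equation on the arc, is anti-multiplicative, and
`T (x y) = T y * f x`, which at `y = T 1` gives `f = T`. The scalars `l` with
`T (l x) = conj l • T x` form a subsemiring of `ℂ`; containing an arc of the unit circle, it
contains the whole circle, hence every real `2 cos φ = e^{iφ} + e^{-iφ}`, hence all of `ℂ`.
-/

lemma Real.four_rpow_lt_two {r : ℝ} (hr : r < 1 / 2) : (4 : ℝ) ^ r < 2 := by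
  rw [show (4 : ℝ) = 2 ^ (2 : ℝ) by norm_num, ← Real.rpow_mul (by norm_num)]
  calc (2 : ℝ) ^ (2 * r) < 2 ^ (1 : ℝ) :=
        Real.rpow_lt_rpow_of_exponent_lt (by norm_num) (by linarith)
    _ = 2 := Real.rpow_one 2

lemma tendsto_inv_pow_smul_of_norm_le {𝕜 E : Type*} [NormedField 𝕜] [SeminormedAddCommGroup E]
    [NormedSpace 𝕜 E] {c : 𝕜} {b s θ r : ℝ} {g : ℕ → E} (hb : 0 ≤ b) (hs : 0 ≤ s)
    (hbc : b ^ r < ‖c‖) (hg : ∀ n, ‖g n‖ ≤ θ * (b ^ n * s) ^ r) :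
    Tendsto (fun n => (c ^ n)⁻¹ • g n) atTop (𝓝 0) := by
  have hc : 0 < ‖c‖ := (Real.rpow_nonneg hb r).trans_lt hbc
  have hq : Tendsto (fun n => θ * s ^ r * (b ^ r / ‖c‖) ^ n) atTop (𝓝 0) := by
    simpa using (tendsto_pow_atTop_nhds_zero_of_lt_one (by positivity)
      ((div_lt_one hc).2 hbc)).const_mul (θ * s ^ r)
  refine squeeze_zero_norm (fun n => ?_) hq
  calc ‖(c ^ n)⁻¹ • g n‖ = (‖c‖ ^ n)⁻¹ * ‖g n‖ := by rw [norm_smul, norm_inv, norm_pow]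
    _ ≤ (‖c‖ ^ n)⁻¹ * (θ * (b ^ n * s) ^ r) := by gcongr; exact hg n
    _ = θ * s ^ r * (b ^ r / ‖c‖) ^ n := by
      rw [Real.mul_rpow (by positivity) hs, ← Real.rpow_pow_comm hb, div_pow]
      field_simp

def IsDyadicLimit {E : Type*} [AddCommGroup E] [Module ℂ E] [TopologicalSpace E]
    (f T : E → E) : Prop :=
  ∀ x, Tendsto (fun n : ℕ => ((2 : ℂ) ^ n)⁻¹ • f ((2 : ℂ) ^ n • x)) atTop (𝓝 (T x))

namespace IsDyadicLimit

variable {E : Type*} [NormedRing E] [NormedAlgebra ℂ E] {f T : E → E} {θ r : ℝ}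

lemma map_zero (hT : IsDyadicLimit f T) : T 0 = 0 := by
  have h : Tendsto (fun n : ℕ => ((2 : ℂ) ^ n)⁻¹) atTop (𝓝 0) := by
    simpa only [inv_pow] using tendsto_pow_atTop_nhds_zero_of_norm_lt_one (x := (2 : ℂ)⁻¹)
      (by norm_num)
  refine tendsto_nhds_unique (hT 0) ?_
  simpa only [smul_zero, zero_smul] using h.smul_const (f 0)

lemma tendsto_four_pow (hT : IsDyadicLimit f T) (x : E) :
    Tendsto (fun n : ℕ => ((4 : ℂ) ^ n)⁻¹ • f ((4 : ℂ) ^ n • x)) atTop (𝓝 (T x)) := by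
  have h := (hT x).comp (strictMono_mul_left_of_pos two_pos).tendsto_atTop
  norm_num [Function.comp_def, pow_mul] at h
  exact h

lemma norm_two_pow_smul_mul_two_pow_smul (n : ℕ) (x y : E) :
    ‖((2 : ℂ) ^ n • x) * ((2 : ℂ) ^ n • y)‖ = 4 ^ n * ‖x * y‖ := by
  rw [smul_mul_smul_comm, ← mul_pow, norm_smul, norm_pow]
  norm_num

lemma jensenDiff_eq_zero (hT : IsDyadicLimit f T) {l : ℂ} (hr : r < 1 / 2)
    (hD : ∀ x y, ‖jensenDiff f l x y‖ ≤ θ * ‖x * y‖ ^ r) (x y : E) : jensenDiff T l x y = 0 := by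
  have hscale : ∀ n : ℕ, ((2 : ℂ) ^ n)⁻¹ • jensenDiff f l ((2 : ℂ) ^ n • x) ((2 : ℂ) ^ n • y) =
      (2 * (starRingEnd ℂ) l) • (((2 : ℂ) ^ n)⁻¹ • f ((2 : ℂ) ^ n • (2 : ℂ)⁻¹ • (x + y))) -
        ((2 : ℂ) ^ n)⁻¹ • f ((2 : ℂ) ^ n • l • x) - ((2 : ℂ) ^ n)⁻¹ • f ((2 : ℂ) ^ n • l • y) := by
    intro n
    rw [jensenDiff, smul_comm l, smul_comm l, ← smul_add, smul_comm (2 : ℂ)⁻¹, smul_sub, smul_sub,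
      smul_comm ((2 : ℂ) ^ n)⁻¹ (2 * _)]
  have hlim : Tendsto (fun n : ℕ => ((2 : ℂ) ^ n)⁻¹ •
      jensenDiff f l ((2 : ℂ) ^ n • x) ((2 : ℂ) ^ n • y)) atTop (𝓝 (jensenDiff T l x y)) := by
    simp only [hscale]
    exact (((hT _).const_smul _).sub (hT _)).sub (hT _)
  have hbound : ∀ n : ℕ, ‖jensenDiff f l ((2 : ℂ) ^ n • x) ((2 : ℂ) ^ n • y)‖ ≤
      θ * (4 ^ n * ‖x * y‖) ^ r := fun n => by
    rw [← norm_two_pow_smul_mul_two_pow_smul]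
    exact hD _ _
  exact tendsto_nhds_unique hlim (tendsto_inv_pow_smul_of_norm_le (by norm_num) (norm_nonneg _)
    (by simpa using Real.four_rpow_lt_two hr) hbound)

lemma map_mul (hT : IsDyadicLimit f T) (hr : r < 1)
    (hmul : ∀ x y, ‖f (x * y) - f y * f x‖ ≤ θ * ‖x * y‖ ^ r) (x y : E) :
    T (x * y) = T y * T x := by
  have hscale : ∀ n : ℕ, ((4 : ℂ) ^ n)⁻¹ •
      (f (((2 : ℂ) ^ n • x) * ((2 : ℂ) ^ n • y)) - f ((2 : ℂ) ^ n • y) * f ((2 : ℂ) ^ n • x)) =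
      ((4 : ℂ) ^ n)⁻¹ • f ((4 : ℂ) ^ n • (x * y)) -
        (((2 : ℂ) ^ n)⁻¹ • f ((2 : ℂ) ^ n • y)) * (((2 : ℂ) ^ n)⁻¹ • f ((2 : ℂ) ^ n • x)) := by
    intro n
    rw [smul_mul_smul_comm, smul_mul_smul_comm, ← mul_inv, ← mul_pow, smul_sub]
    norm_num
  have hlim : Tendsto (fun n : ℕ => ((4 : ℂ) ^ n)⁻¹ •
      (f (((2 : ℂ) ^ n • x) * ((2 : ℂ) ^ n • y)) - f ((2 : ℂ) ^ n • y) * f ((2 : ℂ) ^ n • x)))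
      atTop (𝓝 (T (x * y) - T y * T x)) := by
    simp only [hscale]
    exact (hT.tendsto_four_pow _).sub ((hT y).mul (hT x))
  have hbound : ∀ n : ℕ, ‖f (((2 : ℂ) ^ n • x) * ((2 : ℂ) ^ n • y)) -
      f ((2 : ℂ) ^ n • y) * f ((2 : ℂ) ^ n • x)‖ ≤ θ * (4 ^ n * ‖x * y‖) ^ r := fun n => by
    rw [← norm_two_pow_smul_mul_two_pow_smul]
    exact hmul _ _
  exact sub_eq_zero.1 (tendsto_nhds_unique hlim (tendsto_inv_pow_smul_of_norm_le (by norm_num)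
    (norm_nonneg _) (by simpa using Real.rpow_lt_self_of_one_lt (by norm_num : (1 : ℝ) < 4) hr)
    hbound))

lemma map_mul_eq_mul_apply (hT : IsDyadicLimit f T) (hr : r < 1)
    (hmul : ∀ x y, ‖f (x * y) - f y * f x‖ ≤ θ * ‖x * y‖ ^ r) (x y : E) :
    T (x * y) = T y * f x := by
  have hscale : ∀ n : ℕ, ((2 : ℂ) ^ n)⁻¹ • (f (x * (2 : ℂ) ^ n • y) - f ((2 : ℂ) ^ n • y) * f x) =
      ((2 : ℂ) ^ n)⁻¹ • f ((2 : ℂ) ^ n • (x * y)) -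
        (((2 : ℂ) ^ n)⁻¹ • f ((2 : ℂ) ^ n • y)) * f x := by
    intro n
    rw [mul_smul_comm, smul_sub, smul_mul_assoc]
  have hlim : Tendsto (fun n : ℕ => ((2 : ℂ) ^ n)⁻¹ •
      (f (x * (2 : ℂ) ^ n • y) - f ((2 : ℂ) ^ n • y) * f x)) atTop (𝓝 (T (x * y) - T y * f x)) := by
    simp only [hscale]
    exact (hT _).sub ((hT y).mul_const (f x))
  have hbound : ∀ n : ℕ, ‖f (x * (2 : ℂ) ^ n • y) - f ((2 : ℂ) ^ n • y) * f x‖ ≤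
      θ * (2 ^ n * ‖x * y‖) ^ r := fun n => by
    have h := hmul x ((2 : ℂ) ^ n • y)
    rw [mul_smul_comm, norm_smul, norm_pow] at h
    simpa using h
  exact sub_eq_zero.1 (tendsto_nhds_unique hlim (tendsto_inv_pow_smul_of_norm_le (by norm_num)
    (norm_nonneg _) (by simpa using Real.rpow_lt_self_of_one_lt (by norm_num : (1 : ℝ) < 2) hr)
    hbound))

end IsDyadicLimit

section Jensen

variable {E : Type*} [NormedRing E] [NormedAlgebra ℂ E] {T : E → E}

lemma map_add_of_jensenDiff_one_eq_zero (h0 : T 0 = 0) (hJ : ∀ x y, jensenDiff T 1 x y = 0)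
    (x y : E) : T (x + y) = T x + T y := by
  have h₁ := hJ x y
  have h₂ := hJ (x + y) 0
  simp only [jensenDiff, map_one, mul_one, one_smul, add_zero, h0, sub_zero, sub_sub,
    sub_eq_zero] at h₁ h₂
  rw [← h₂, h₁]

lemma map_smul_of_jensenDiff_eq_zero {l : ℂ} {x : E} (h : jensenDiff T l x x = 0) :
    T (l • x) = (starRingEnd ℂ) l • T x := by
  rw [jensenDiff, show (2 : ℂ)⁻¹ • (x + x) = x by module, sub_sub, sub_eq_zero, ← two_smul ℂ,
    mul_smul] at h
  exact smul_right_injective E two_ne_zero h.symm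

end Jensen

def AddMonoidHom.semilinearSubsemiring {R S V W : Type*} [Semiring R] [Semiring S]
    [AddCommMonoid V] [Module R V] [AddCommMonoid W] [Module S W] (σ : R →+* S) (T : V →+ W) :
    Subsemiring R where
  carrier := {a | ∀ x, T (a • x) = σ a • T x}
  mul_mem' {a b} ha hb x := by rw [mul_smul, ha (b • x), hb x, map_mul, mul_smul]
  one_mem' x := by simp only [one_smul, map_one]
  add_mem' {a b} ha hb x := by rw [add_smul, map_add, ha x, hb x, map_add, add_smul]
  zero_mem' x := by simp only [zero_smul, map_zero]

section UnitArc

open Complex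

variable {n₀ : ℕ} {S : Subsemiring ℂ}

lemma exp_mul_I_mem_of_unitArc_subset (hn₀ : 0 < n₀) (hS : unitArc n₀ ⊆ S) {ψ : ℝ}
    (hψ : 0 ≤ ψ) : exp (ψ * I) ∈ S := by
  obtain ⟨k, hk⟩ := exists_nat_gt (ψ * n₀)
  have hn : (0 : ℝ) < n₀ := Nat.cast_pos.2 hn₀
  have hk0 : (0 : ℝ) < k := (mul_nonneg hψ hn.le).trans_lt hk
  have hpow : exp (ψ * I) = exp (↑(ψ / k) * I) ^ k := by
    rw [← exp_nat_mul]
    congr 1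
    have : (k : ℂ) ≠ 0 := by exact_mod_cast hk0.ne'
    push_cast
    field_simp
  rw [hpow]
  refine pow_mem (hS ⟨ψ / k, by positivity, ?_, rfl⟩) k
  rw [div_le_div_iff₀ hk0 hn]
  linarith

lemma mem_of_norm_eq_one_of_unitArc_subset (hn₀ : 0 < n₀) (hS : unitArc n₀ ⊆ S) {u : ℂ}
    (hu : ‖u‖ = 1) : u ∈ S := by
  have hexp : u = exp (↑(arg u + 2 * Real.pi) * I) := by
    rw [ofReal_add, add_mul, exp_add, ofReal_mul, ofReal_ofNat, exp_two_pi_mul_I, mul_one]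
    simpa [hu] using (norm_mul_exp_arg_mul_I u).symm
  rw [hexp]
  exact exp_mul_I_mem_of_unitArc_subset hn₀ hS (by linarith [neg_pi_lt_arg u, Real.pi_pos])

lemma ofReal_mem_of_unitArc_subset (hn₀ : 0 < n₀) (hS : unitArc n₀ ⊆ S) (t : ℝ) : (t : ℂ) ∈ S := by
  have hsmall : ∀ s : ℝ, |s| ≤ 2 → (s : ℂ) ∈ S := by
    intro s hs
    obtain ⟨hs₁, hs₂⟩ := abs_le.1 hs
    have hcos : (s : ℂ) = exp (↑(Real.arccos (s / 2)) * I) + exp (↑(-Real.arccos (s / 2)) * I) := by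
      rw [ofReal_neg, ← two_cos, ← ofReal_cos, Real.cos_arccos (by linarith) (by linarith)]
      push_cast
      ring
    rw [hcos]
    exact add_mem (mem_of_norm_eq_one_of_unitArc_subset hn₀ hS (norm_exp_ofReal_mul_I _))
      (mem_of_norm_eq_one_of_unitArc_subset hn₀ hS (norm_exp_ofReal_mul_I _))
  obtain ⟨k, hk⟩ := exists_nat_gt |t|
  have hk0 : (0 : ℝ) < k := (abs_nonneg t).trans_lt hk
  have hsplit : (t : ℂ) = k * ↑(t / k) := by
    have : (k : ℂ) ≠ 0 := by exact_mod_cast hk0.ne'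
    push_cast
    field_simp
  rw [hsplit]
  refine mul_mem (natCast_mem S k) (hsmall _ ?_)
  rw [abs_div, Nat.abs_cast, div_le_iff₀ hk0]
  linarith

lemma Subsemiring.eq_top_of_unitArc_subset (hn₀ : 0 < n₀) (hS : unitArc n₀ ⊆ S) : S = ⊤ := by
  refine (Subsemiring.eq_top_iff' S).2 fun z => ?_
  rw [← norm_mul_exp_arg_mul_I z]
  exact mul_mem (ofReal_mem_of_unitArc_subset hn₀ hS _)
    (mem_of_norm_eq_one_of_unitArc_subset hn₀ hS (norm_exp_ofReal_mul_I _))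

end UnitArc

theorem superstability_involution_direct_general {E : Type*} [NormedRing E] [NormedAlgebra ℂ E]
    (n₀ : ℕ) (hn₀ : 0 < n₀) (r : ℝ) (hr : r < 1 / 2)
    (θ : ℝ) (f : E → E)
    (hD : ∀ x y : E, ∀ l ∈ unitArc n₀, ‖jensenDiff f l x y‖ ≤ θ * ‖x * y‖ ^ r)
    (hmul : ∀ x y : E, ‖f (x * y) - f y * f x‖ ≤ θ * ‖x * y‖ ^ r)
    (hlim : ∀ x : E, ∃ y : E,
      Tendsto (fun n : ℕ => ((2 : ℂ) ^ n)⁻¹ • f ((2 : ℂ) ^ n • x)) atTop (𝓝 y) ∧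
      Tendsto (fun m : ℕ => ((2 : ℂ) ^ m)⁻¹ • f ((2 : ℂ) ^ m • y)) atTop (𝓝 x)) :
    IsInvolution f := by
  choose T hT hTinv using hlim
  have hTT : ∀ x, T (T x) = x := fun x => tendsto_nhds_unique (hT (T x)) (hTinv x)
  have hr1 : r < 1 := by linarith
  have hanti := IsDyadicLimit.map_mul hT hr1 hmul
  have hfT : f = T := funext fun x =>
    calc f x = T (T 1) * f x := by rw [hTT, one_mul]
      _ = T (x * T 1) := (IsDyadicLimit.map_mul_eq_mul_apply hT hr1 hmul x (T 1)).symm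
      _ = T x := by rw [hanti, hTT, one_mul]
  have hJ : ∀ l ∈ unitArc n₀, ∀ x y, jensenDiff T l x y = 0 :=
    fun l hl => IsDyadicLimit.jensenDiff_eq_zero hT hr (hD · · l hl)
  have hadd : ∀ x y, T (x + y) = T x + T y := map_add_of_jensenDiff_one_eq_zero
    (IsDyadicLimit.map_zero hT) (hJ 1 ⟨0, le_rfl, by positivity, by simp⟩)
  have hsmul : ∀ (l : ℂ) x, T (l • x) = (starRingEnd ℂ) l • T x :=
    (Subsemiring.eq_top_iff' _).1 <| Subsemiring.eq_top_of_unitArc_subset (S :=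
      (AddMonoidHom.mk' T hadd).semilinearSubsemiring (starRingEnd ℂ)) hn₀ fun l hl x =>
        map_smul_of_jensenDiff_eq_zero (hJ l hl x x)
  rw [hfT]
  exact ⟨fun x y l m => by rw [hadd, hsmul, hsmul], hanti, hTT⟩

theorem superstability_involution_direct {E : Type*} [NormedRing E] [NormedAlgebra ℂ E] [CompleteSpace E]
    (n₀ : ℕ) (hn₀ : 0 < n₀) (r : ℝ) (hr0 : 0 < r) (hr : r < 1 / 2)
    (θ : ℝ) (hθ : 0 ≤ θ)
    (f : E → E) (hf0 : f 0 = 0)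
    (hD : ∀ x y : E, ∀ l ∈ unitArc n₀, ‖jensenDiff f l x y‖ ≤ θ * ‖x * y‖ ^ r)
    (hmul : ∀ x y : E, ‖f (x * y) - f y * f x‖ ≤ θ * ‖x * y‖ ^ r)
    (hlim : ∀ x : E, ∃ y : E,
      Tendsto (fun n : ℕ => ((2 : ℂ) ^ n)⁻¹ • f ((2 : ℂ) ^ n • x)) atTop (𝓝 y) ∧
      Tendsto (fun m : ℕ => ((2 : ℂ) ^ m)⁻¹ • f ((2 : ℂ) ^ m • y)) atTop (𝓝 x)) :
    IsInvolution f :=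
  superstability_involution_direct_general n₀ hn₀ r hr θ f hD hmul hlim
end

section
/- Let E be a complex Banach space, L a constant with 0 < L < 1, and φ : E × E → [0,∞) a function satisfying φ(2x, 2y) ≤ 2L·φ(x, y) for all x, y ∈ E. Suppose f : E → E satisfies f(0) = 0 and the Jensen-type inequality ‖2·f((x+y)/2) − f(x) − f(y)‖ ≤ φ(x, y) for all x, y ∈ E. Then for every x ∈ E the sequence (2^{−n} f(2^n x))_{n∈ℕ} converges in E; the map I : E → E defined by I(x) = lim_{n→∞} 2^{−n} f(2^n x) is additive (I(x+y) = I(x) + I(y) for all x, y ∈ E) and satisfies ‖I(x) − f(x)‖ ≤ (L/(1−L))·φ(x, 0) for all x ∈ E. -/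
open Filter Topology

theorem jensen_stability_direct {E : Type*} [NormedAddCommGroup E] [NormedSpace ℂ E]
    [CompleteSpace E]
    (L : ℝ) (hL0 : 0 < L) (hL1 : L < 1)
    (φ : E → E → ℝ) (hφ0 : ∀ x y : E, 0 ≤ φ x y)
    (hφ : ∀ x y : E, φ ((2 : ℂ) • x) ((2 : ℂ) • y) ≤ 2 * L * φ x y)
    (f : E → E) (hf0 : f 0 = 0)
    (hJ : ∀ x y : E, ‖(2 : ℂ) • f ((2 : ℂ)⁻¹ • (x + y)) - f x - f y‖ ≤ φ x y) :
    ∃ I : E → E,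
      (∀ x : E,
        Tendsto (fun n : ℕ => ((2 : ℂ) ^ n)⁻¹ • f ((2 : ℂ) ^ n • x)) atTop (𝓝 (I x))) ∧
      (∀ x y : E, I (x + y) = I x + I y) ∧
      (∀ x : E, ‖I x - f x‖ ≤ L / (1 - L) * φ x 0) := by
  have h2L : (0:ℝ) ≤ 2 * L := by positivity
  -- iterated bound on φ
  have hφn : ∀ (n : ℕ) (x y : E), φ ((2:ℂ)^n • x) ((2:ℂ)^n • y) ≤ (2*L)^n * φ x y := by
    intro n
    induction n with
    | zero => intro x y; simp
    | succ n ih =>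
      intro x y
      have hx : (2:ℂ)^(n+1) • x = (2:ℂ) • ((2:ℂ)^n • x) := by
        rw [smul_smul, ← pow_succ']
      have hy : (2:ℂ)^(n+1) • y = (2:ℂ) • ((2:ℂ)^n • y) := by
        rw [smul_smul, ← pow_succ']
      calc φ ((2:ℂ)^(n+1) • x) ((2:ℂ)^(n+1) • y)
          = φ ((2:ℂ) • ((2:ℂ)^n • x)) ((2:ℂ) • ((2:ℂ)^n • y)) := by rw [hx, hy]
        _ ≤ 2 * L * φ ((2:ℂ)^n • x) ((2:ℂ)^n • y) := hφ _ _
        _ ≤ 2 * L * ((2*L)^n * φ x y) := mul_le_mul_of_nonneg_left (ih x y) h2L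
        _ = (2*L)^(n+1) * φ x y := by ring
  -- single-step estimate
  have hstep : ∀ x : E, ‖(2:ℂ)⁻¹ • f ((2:ℂ) • x) - f x‖ ≤ L * φ x 0 := by
    intro x
    have h1 := hJ ((2:ℂ) • x) 0
    have e1 : (2:ℂ)⁻¹ • ((2:ℂ) • x + 0) = x := by
      rw [add_zero, smul_smul]; norm_num
    rw [e1, hf0, sub_zero] at h1
    have h2 : φ ((2:ℂ) • x) 0 ≤ 2 * L * φ x 0 := by
      have := hφ x 0
      simpa using this
    have h3 : ‖(2:ℂ)⁻¹ • f ((2:ℂ) • x) - f x‖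
        = (2:ℝ)⁻¹ * ‖(2:ℂ) • f x - f ((2:ℂ) • x)‖ := by
      rw [← norm_neg ((2:ℂ) • f x - f ((2:ℂ) • x))]
      have e4 : (2:ℂ)⁻¹ • f ((2:ℂ) • x) - f x
          = (2:ℂ)⁻¹ • (-((2:ℂ) • f x - f ((2:ℂ) • x))) := by
        module
      rw [e4, norm_smul]
      norm_num
    rw [h3]
    calc (2:ℝ)⁻¹ * ‖(2:ℂ) • f x - f ((2:ℂ) • x)‖
        ≤ (2:ℝ)⁻¹ * (2 * L * φ x 0) := by
          apply mul_le_mul_of_nonneg_left (h1.trans h2)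
          norm_num
      _ = L * φ x 0 := by ring
  set g : ℕ → E → E := fun n x => ((2:ℂ)^n)⁻¹ • f ((2:ℂ)^n • x) with hg
  have hnorm : ∀ n : ℕ, ‖((2:ℂ)^n)⁻¹‖ = ((2:ℝ)^n)⁻¹ := by
    intro n
    simp [norm_inv, norm_pow]
  have hdist : ∀ (x : E) (n : ℕ), dist (g n x) (g (n+1) x) ≤ (L * φ x 0) * L^n := by
    intro x n
    have a1 : (2:ℂ)^(n+1) • x = (2:ℂ) • ((2:ℂ)^n • x) := by rw [smul_smul, ← pow_succ']
    have a2 : ((2:ℂ)^(n+1))⁻¹ = ((2:ℂ)^n)⁻¹ * (2:ℂ)⁻¹ := by rw [pow_succ, mul_inv]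
    have e1 : g (n+1) x - g n x
        = ((2:ℂ)^n)⁻¹ • ((2:ℂ)⁻¹ • f ((2:ℂ) • ((2:ℂ)^n • x)) - f ((2:ℂ)^n • x)) := by
      simp only [hg]
      rw [a1, a2, ← smul_smul, ← smul_sub]
    rw [dist_comm, dist_eq_norm, e1, norm_smul, hnorm]
    have h2n : (0:ℝ) < (2:ℝ)^n := by positivity
    calc ((2:ℝ)^n)⁻¹ * ‖(2:ℂ)⁻¹ • f ((2:ℂ) • ((2:ℂ)^n • x)) - f ((2:ℂ)^n • x)‖
        ≤ ((2:ℝ)^n)⁻¹ * (L * φ ((2:ℂ)^n • x) 0) := by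
          apply mul_le_mul_of_nonneg_left (hstep _)
          positivity
      _ ≤ ((2:ℝ)^n)⁻¹ * (L * ((2*L)^n * φ x 0)) := by
          apply mul_le_mul_of_nonneg_left _ (by positivity)
          apply mul_le_mul_of_nonneg_left _ hL0.le
          have := hφn n x 0
          simpa using this
      _ = (L * φ x 0) * L^n := by
          rw [mul_pow]
          field_simp
  have hC : ∀ x : E, ∃ l : E, Tendsto (fun n => g n x) atTop (𝓝 l) := fun x =>
    cauchySeq_tendsto_of_complete (cauchySeq_of_le_geometric L (L * φ x 0) hL1 (hdist x))
  choose I hI using hC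
  have hIzero : I 0 = 0 := by
    have h0 : Tendsto (fun n : ℕ => g n 0) atTop (𝓝 (0:E)) := by
      have e : ∀ n : ℕ, g n 0 = 0 := by intro n; simp [hg, hf0]
      simp only [e]
      exact tendsto_const_nhds
    exact tendsto_nhds_unique (hI 0) h0
  have hkey : ∀ x y : E, (2:ℂ) • I ((2:ℂ)⁻¹ • (x+y)) = I x + I y := by
    intro x y
    have hbound : ∀ n : ℕ,
        ‖(2:ℂ) • g n ((2:ℂ)⁻¹ • (x+y)) - g n x - g n y‖ ≤ φ x y * L^n := by
      intro n
      have e1 : (2:ℂ)^n • ((2:ℂ)⁻¹ • (x+y)) = (2:ℂ)⁻¹ • ((2:ℂ)^n • x + (2:ℂ)^n • y) := by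
        module
      have e2 : (2:ℂ) • g n ((2:ℂ)⁻¹ • (x+y)) - g n x - g n y
          = ((2:ℂ)^n)⁻¹ • ((2:ℂ) • f ((2:ℂ)⁻¹ • ((2:ℂ)^n • x + (2:ℂ)^n • y))
              - f ((2:ℂ)^n • x) - f ((2:ℂ)^n • y)) := by
        simp only [hg]
        rw [e1, smul_comm (2:ℂ) (((2:ℂ)^n)⁻¹), ← smul_sub, ← smul_sub]
      rw [e2, norm_smul, hnorm]
      have h2n : (0:ℝ) < (2:ℝ)^n := by positivity
      calc ((2:ℝ)^n)⁻¹ * ‖(2:ℂ) • f ((2:ℂ)⁻¹ • ((2:ℂ)^n • x + (2:ℂ)^n • y))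
              - f ((2:ℂ)^n • x) - f ((2:ℂ)^n • y)‖
          ≤ ((2:ℝ)^n)⁻¹ * φ ((2:ℂ)^n • x) ((2:ℂ)^n • y) := by
            apply mul_le_mul_of_nonneg_left (hJ _ _)
            positivity
        _ ≤ ((2:ℝ)^n)⁻¹ * ((2*L)^n * φ x y) := by
            apply mul_le_mul_of_nonneg_left (hφn n x y)
            positivity
        _ = φ x y * L^n := by
            rw [mul_pow]
            field_simp
    have h0 : Tendsto (fun n : ℕ => (2:ℂ) • g n ((2:ℂ)⁻¹ • (x+y)) - g n x - g n y)
        atTop (𝓝 (0:E)) := by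
      apply squeeze_zero_norm hbound
      have : Tendsto (fun n : ℕ => φ x y * L^n) atTop (𝓝 (φ x y * 0)) :=
        tendsto_const_nhds.mul (tendsto_pow_atTop_nhds_zero_of_lt_one hL0.le hL1)
      simpa using this
    have h1 : Tendsto (fun n : ℕ => (2:ℂ) • g n ((2:ℂ)⁻¹ • (x+y)) - g n x - g n y) atTop
        (𝓝 ((2:ℂ) • I ((2:ℂ)⁻¹ • (x+y)) - I x - I y)) :=
      (((hI _).const_smul (2:ℂ)).sub (hI x)).sub (hI y)
    have h2 : (2:ℂ) • I ((2:ℂ)⁻¹ • (x+y)) - I x - I y = 0 := tendsto_nhds_unique h1 h0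
    rw [sub_sub] at h2
    exact sub_eq_zero.mp h2
  refine ⟨I, ?_, ?_, ?_⟩
  · intro x
    have := hI x
    simpa [hg] using this
  · intro x y
    have h1 := hkey x y
    have h2 := hkey (x+y) 0
    rw [add_zero, hIzero, add_zero] at h2
    rw [← h2, h1]
  · intro x
    have hb := dist_le_of_le_geometric_of_tendsto₀ L (L * φ x 0) hL1 (hdist x) (hI x)
    have hg0 : g 0 x = f x := by simp [hg]
    rw [hg0] at hb
    rw [← dist_eq_norm, dist_comm]
    calc dist (f x) (I x) ≤ L * φ x 0 / (1 - L) := hb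
      _ = L / (1 - L) * φ x 0 := by ring
end

section
/- Let E be a complex Banach space, L a constant with 0 < L < 1, and φ : E × E → [0,∞) a function satisfying φ(x/2, y/2) ≤ (L/2)·φ(x, y) for all x, y ∈ E. Suppose f : E → E satisfies f(0) = 0 and the Jensen-type inequality ‖2·f((x+y)/2) − f(x) − f(y)‖ ≤ φ(x, y) for all x, y ∈ E. Then for every x ∈ E the sequence (2^{n} f(2^{−n} x))_{n∈ℕ} converges in E; the map I : E → E defined by I(x) = lim_{n→∞} 2^{n} f(2^{−n} x) is additive (I(x+y) = I(x) + I(y) for all x, y ∈ E) and satisfies ‖I(x) − f(x)‖ ≤ (1/(1−L))·φ(x, 0) for all x ∈ E. -/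
open Filter Topology

theorem jensen_stability_inverse {E : Type*} [NormedAddCommGroup E] [NormedSpace ℂ E]
    [CompleteSpace E]
    (L : ℝ) (hL0 : 0 < L) (hL1 : L < 1)
    (φ : E → E → ℝ) (hφ0 : ∀ x y : E, 0 ≤ φ x y)
    (hφ : ∀ x y : E, φ ((2 : ℂ)⁻¹ • x) ((2 : ℂ)⁻¹ • y) ≤ L / 2 * φ x y)
    (f : E → E) (hf0 : f 0 = 0)
    (hJ : ∀ x y : E, ‖(2 : ℂ) • f ((2 : ℂ)⁻¹ • (x + y)) - f x - f y‖ ≤ φ x y) :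
    ∃ I : E → E,
      (∀ x : E,
        Tendsto (fun n : ℕ => (2 : ℂ) ^ n • f (((2 : ℂ) ^ n)⁻¹ • x)) atTop (𝓝 (I x))) ∧
      (∀ x y : E, I (x + y) = I x + I y) ∧
      (∀ x : E, ‖I x - f x‖ ≤ 1 / (1 - L) * φ x 0) := by
  have hφ' : ∀ (n : ℕ) (x y : E),
      φ (((2:ℂ)^n)⁻¹ • x) (((2:ℂ)^n)⁻¹ • y) ≤ (L/2)^n * φ x y := by
    intro n
    induction n with
    | zero => intro x y; simp
    | succ n ih =>
      intro x y
      have h1 : ∀ z : E, ((2:ℂ)^(n+1))⁻¹ • z = (2:ℂ)⁻¹ • (((2:ℂ)^n)⁻¹ • z) := by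
        intro z; rw [smul_smul, ← mul_inv, ← pow_succ']
      rw [h1 x, h1 y]
      calc φ _ _ ≤ L/2 * φ (((2:ℂ)^n)⁻¹ • x) (((2:ℂ)^n)⁻¹ • y) := hφ _ _
        _ ≤ L/2 * ((L/2)^n * φ x y) :=
            mul_le_mul_of_nonneg_left (ih x y) (by positivity)
        _ = (L/2)^(n+1) * φ x y := by ring
  set g : E → ℕ → E := fun x n => (2:ℂ)^n • f (((2:ℂ)^n)⁻¹ • x) with hg
  have hnorm2 : ∀ n : ℕ, ‖(2:ℂ)^n‖ = 2^n := by intro n; rw [norm_pow]; norm_num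
  have key : ∀ (x y : E) (n : ℕ),
      ‖g (x+y) (n+1) - g x n - g y n‖ ≤ L^n * φ x y := by
    intro x y n
    have hx : ((2:ℂ)^(n+1))⁻¹ • (x+y)
        = (2:ℂ)⁻¹ • ((((2:ℂ)^n)⁻¹ • x) + (((2:ℂ)^n)⁻¹ • y)) := by
      rw [← smul_add, smul_smul, ← mul_inv, ← pow_succ']
    have heq : g (x+y) (n+1) - g x n - g y n
        = (2:ℂ)^n • ((2:ℂ) • f ((2:ℂ)⁻¹ • ((((2:ℂ)^n)⁻¹ • x) + (((2:ℂ)^n)⁻¹ • y)))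
            - f (((2:ℂ)^n)⁻¹ • x) - f (((2:ℂ)^n)⁻¹ • y)) := by
      simp only [hg, hx, smul_sub, smul_smul, ← pow_succ]
    rw [heq, norm_smul, hnorm2]
    have h2L : (2:ℝ)^n * (L/2)^n = L^n := by rw [← mul_pow]; congr 1; ring
    calc (2:ℝ)^n * ‖_‖ ≤ (2:ℝ)^n * φ (((2:ℂ)^n)⁻¹ • x) (((2:ℂ)^n)⁻¹ • y) :=
          mul_le_mul_of_nonneg_left (hJ _ _) (by positivity)
      _ ≤ (2:ℝ)^n * ((L/2)^n * φ x y) :=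
          mul_le_mul_of_nonneg_left (hφ' n x y) (by positivity)
      _ = L^n * φ x y := by rw [← mul_assoc, h2L]
  have g0 : ∀ n : ℕ, g (0:E) n = 0 := by intro n; simp [hg, hf0]
  have step : ∀ (x : E) (n : ℕ), dist (g x n) (g x (n+1)) ≤ φ x 0 * L^n := by
    intro x n
    rw [dist_eq_norm, norm_sub_rev]
    have := key x 0 n
    simpa [g0, mul_comm] using this
  have hcau : ∀ x : E, CauchySeq (g x) := fun x =>
    cauchySeq_of_le_geometric L (φ x 0) hL1 (step x)
  have hex : ∀ x : E, ∃ a, Tendsto (g x) atTop (𝓝 a) := fun x =>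
    cauchySeq_tendsto_of_complete (hcau x)
  choose I hI using hex
  refine ⟨I, hI, ?_, ?_⟩
  · intro x y
    have h1 : Tendsto (fun n : ℕ => g (x+y) (n+1) - g x n - g y n) atTop
        (𝓝 (I (x+y) - I x - I y)) :=
      (((hI (x+y)).comp (tendsto_add_atTop_nat 1)).sub (hI x)).sub (hI y)
    have h2 : Tendsto (fun n : ℕ => g (x+y) (n+1) - g x n - g y n) atTop (𝓝 0) := by
      apply squeeze_zero_norm (key x y)
      have := (tendsto_pow_atTop_nhds_zero_of_lt_one hL0.le hL1).mul_const (φ x y)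
      simpa using this
    have h3 := tendsto_nhds_unique h1 h2
    have h4 : I (x+y) - I x - I y = 0 := h3
    rw [sub_sub, sub_eq_zero] at h4
    exact h4
  · intro x
    have hd := dist_le_of_le_geometric_of_tendsto₀ L (φ x 0) hL1 (step x) (hI x)
    have hg0 : g x 0 = f x := by simp [hg]
    rw [hg0] at hd
    rw [← dist_eq_norm, dist_comm]
    calc dist (f x) (I x) ≤ φ x 0 / (1 - L) := hd
      _ = 1 / (1 - L) * φ x 0 := by ring
end

section
/- Let E and F be vector spaces over ℂ, n₀ a positive integer, and I : E → F an additive map (I(x+y) = I(x) + I(y) for all x, y ∈ E) such that I(λx) = conj(λ)·I(x) for all x ∈ E and all λ ∈ T¹_{1/n₀}. Then I(λx) = conj(λ)·I(x) for all x ∈ E and all λ ∈ ℂ; in particular I is conjugate ℂ-linear. -/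
open Filter Topology

/-!
For an additive map `f`, the scalars `c` with `f (c • x) = σ c • f x` for all `x` form a
subsemiring. If it contains the arc `T¹_{1/n₀}`, it contains every `e^{iθ}`: for `θ ≥ 0` write
`e^{iθ} = (e^{iθ/N})^N` with `θ / N ≤ 1 / n₀`, and reduce an arbitrary `θ` modulo `2π`. It then
contains every real `r = N (e^{iθ} + e^{-iθ})` with `θ = arccos (r / 2N)`, hence every
`z = |z| e^{i arg z}`.
-/

namespace AddMonoidHom

variable {R S M M₂ : Type*} [Semiring R] [Semiring S] [AddCommMonoid M] [AddCommMonoid M₂]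
  [Module R M] [Module S M₂]

def semilinearScalars (σ : R →+* S) (f : M →+ M₂) : Subsemiring R where
  carrier := {c | ∀ x, f (c • x) = σ c • f x}
  mul_mem' {a b} ha hb x := by rw [mul_smul, ha, hb, map_mul, mul_smul]
  one_mem' x := by rw [one_smul, map_one, one_smul]
  add_mem' {a b} ha hb x := by rw [add_smul, map_add, ha, hb, map_add, add_smul]
  zero_mem' x := by rw [zero_smul, map_zero, map_zero, zero_smul]

end AddMonoidHom

namespace Complex

open Real

theorem exp_mul_I_mem_of_unitArc_subset {S : Submonoid ℂ} {n₀ : ℕ} (hn₀ : 0 < n₀)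
    (hS : unitArc n₀ ⊆ S) {θ : ℝ} (hθ : 0 ≤ θ) : exp (θ * I) ∈ S := by
  set N := ⌈θ * n₀⌉₊ + 1
  have hN : (0 : ℝ) < N := by positivity
  have hN' : (N : ℂ) ≠ 0 := Nat.cast_ne_zero.mpr (Nat.succ_ne_zero _)
  have hθN : θ / N ≤ 1 / n₀ := by
    rw [div_le_div_iff₀ hN (by positivity), one_mul]
    calc θ * n₀ ≤ ⌈θ * n₀⌉₊ := Nat.le_ceil _
      _ ≤ N := by simp [N]
  have hexp : exp (θ * I) = exp ((θ / N : ℝ) * I) ^ N := by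
    rw [← exp_nat_mul]
    congr 1
    push_cast
    field_simp
  rw [hexp]
  exact pow_mem (hS ⟨θ / N, by positivity, hθN, rfl⟩) N

theorem exp_real_mul_I_mem_of_unitArc_subset {S : Submonoid ℂ} {n₀ : ℕ} (hn₀ : 0 < n₀)
    (hS : unitArc n₀ ⊆ S) (θ : ℝ) : exp (θ * I) ∈ S := by
  have hθ : exp (toIcoMod two_pi_pos 0 θ * I) = exp (θ * I) := by
    rw [← self_sub_toIcoDiv_zsmul]
    push_cast
    exact exp_mul_I_periodic.sub_zsmul_eq _
  simpa only [hθ] using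
    exp_mul_I_mem_of_unitArc_subset hn₀ hS (left_le_toIcoMod two_pi_pos 0 θ)

theorem ofReal_mem_of_exp_mul_I_mem {S : Subsemiring ℂ} (hS : ∀ θ : ℝ, exp (θ * I) ∈ S)
    (r : ℝ) : (r : ℂ) ∈ S := by
  set N := ⌈|r|⌉₊ + 1
  have hN : (0 : ℝ) < N := by positivity
  have hN' : (N : ℂ) ≠ 0 := Nat.cast_ne_zero.mpr (Nat.succ_ne_zero _)
  have hrN : |r / (2 * N)| ≤ 1 := by
    rw [abs_div, abs_of_pos (show (0 : ℝ) < 2 * N by positivity), div_le_one (by positivity)]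
    calc |r| ≤ ⌈|r|⌉₊ := Nat.le_ceil _
      _ ≤ 2 * N := by simp only [N]; push_cast; linarith [Nat.cast_nonneg (α := ℝ) ⌈|r|⌉₊]
  obtain ⟨h₁, h₂⟩ := abs_le.mp hrN
  set θ := arccos (r / (2 * N))
  have hr : (r : ℂ) = N * (exp (θ * I) + exp ((-θ : ℝ) * I)) := by
    rw [ofReal_neg, ← two_cos, ← ofReal_cos, cos_arccos h₁ h₂]
    push_cast
    field_simp
  rw [hr]
  exact mul_mem (natCast_mem S N) (add_mem (hS θ) (hS (-θ)))

theorem subsemiring_eq_top_of_exp_mul_I_mem {S : Subsemiring ℂ}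
    (hS : ∀ θ : ℝ, exp (θ * I) ∈ S) : S = ⊤ := by
  refine eq_top_iff.mpr fun z _ => ?_
  rw [← norm_mul_exp_arg_mul_I z]
  exact mul_mem (ofReal_mem_of_exp_mul_I_mem hS _) (hS _)

end Complex

theorem conj_linear_extension {E F : Type*} [AddCommGroup E] [Module ℂ E]
    [AddCommGroup F] [Module ℂ F]
    (n₀ : ℕ) (hn₀ : 0 < n₀) (I : E → F)
    (hadd : ∀ x y : E, I (x + y) = I x + I y)
    (harc : ∀ x : E, ∀ l ∈ unitArc n₀, I (l • x) = (starRingEnd ℂ) l • I x) :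
    ∀ (x : E) (l : ℂ), I (l • x) = (starRingEnd ℂ) l • I x := by
  set S := (AddMonoidHom.mk' I hadd).semilinearScalars (starRingEnd ℂ)
  have hS : S = ⊤ := Complex.subsemiring_eq_top_of_exp_mul_I_mem
    (Complex.exp_real_mul_I_mem_of_unitArc_subset (S := S.toSubmonoid) hn₀
      fun l hl x => harc x l hl)
  intro x l
  exact (hS ▸ Subsemiring.mem_top l : l ∈ S) x
end

section
/- Let E be a complex Banach algebra, n₀ a positive integer, L a constant with 0 < L < 1, and φ : E × E → [0,∞) a function satisfying φ(2x, 2x) ≤ 2L·φ(x, x) for all x ∈ E. Suppose f : E → E satisfies ‖2·conj(λ)·f(x) − 2·f(λx)‖ ≤ φ(x, x) for all x ∈ E and all λ ∈ T¹_{1/n₀}, and that for each x ∈ E the limit I(x) = lim_{n→∞} 2^{−n} f(2^n x) exists. Then I(λx) = conj(λ)·I(x) for all x ∈ E and all λ ∈ T¹_{1/n₀}. -/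
open Filter Topology

theorem conj_homogeneous_on_arc {E : Type*} [NormedRing E] [NormedAlgebra ℂ E]
    [CompleteSpace E]
    (n₀ : ℕ) (hn₀ : 0 < n₀) (L : ℝ) (hL0 : 0 < L) (hL1 : L < 1)
    (φ : E → E → ℝ) (hφ0 : ∀ x y : E, 0 ≤ φ x y)
    (hφ : ∀ x : E, φ ((2 : ℂ) • x) ((2 : ℂ) • x) ≤ 2 * L * φ x x)
    (f : E → E)
    (hD : ∀ x : E, ∀ l ∈ unitArc n₀,
      ‖(2 * (starRingEnd ℂ) l) • f x - (2 : ℂ) • f (l • x)‖ ≤ φ x x)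
    (I : E → E)
    (hI : ∀ x : E,
      Tendsto (fun n : ℕ => ((2 : ℂ) ^ n)⁻¹ • f ((2 : ℂ) ^ n • x)) atTop (𝓝 (I x))) :
    ∀ x : E, ∀ l ∈ unitArc n₀, I (l • x) = (starRingEnd ℂ) l • I x := by
  intro x l hl
  -- iterated contraction estimate
  have hiter : ∀ n : ℕ, φ ((2 : ℂ) ^ n • x) ((2 : ℂ) ^ n • x) ≤ (2 * L) ^ n * φ x x := by
    intro n
    induction n with
    | zero => simp
    | succ n ih =>
      have h1 : ((2 : ℂ) ^ (n + 1)) • x = (2 : ℂ) • ((2 : ℂ) ^ n • x) := by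
        rw [smul_smul, ← pow_succ']
      rw [h1]
      calc φ ((2 : ℂ) • ((2 : ℂ) ^ n • x)) ((2 : ℂ) • ((2 : ℂ) ^ n • x))
          ≤ 2 * L * φ ((2 : ℂ) ^ n • x) ((2 : ℂ) ^ n • x) := hφ _
        _ ≤ 2 * L * ((2 * L) ^ n * φ x x) := by
            apply mul_le_mul_of_nonneg_left ih (by positivity)
        _ = (2 * L) ^ (n + 1) * φ x x := by ring
  set seq : ℕ → E := fun n =>
    ((2 : ℂ) ^ n)⁻¹ • ((2 * (starRingEnd ℂ) l) • f ((2 : ℂ) ^ n • x)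
      - (2 : ℂ) • f (l • ((2 : ℂ) ^ n • x))) with hseq
  have hnorm : ∀ n : ℕ, ‖seq n‖ ≤ L ^ n * φ x x := by
    intro n
    have h1 : ‖seq n‖ = ‖((2 : ℂ) ^ n)⁻¹‖ *
        ‖(2 * (starRingEnd ℂ) l) • f ((2 : ℂ) ^ n • x)
          - (2 : ℂ) • f (l • ((2 : ℂ) ^ n • x))‖ := norm_smul _ _
    have h2 : ‖((2 : ℂ) ^ n)⁻¹‖ = ((2 : ℝ) ^ n)⁻¹ := by
      simp [norm_inv, norm_pow]
    rw [h1, h2]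
    calc ((2 : ℝ) ^ n)⁻¹ * ‖(2 * (starRingEnd ℂ) l) • f ((2 : ℂ) ^ n • x)
          - (2 : ℂ) • f (l • ((2 : ℂ) ^ n • x))‖
        ≤ ((2 : ℝ) ^ n)⁻¹ * φ ((2 : ℂ) ^ n • x) ((2 : ℂ) ^ n • x) := by
          apply mul_le_mul_of_nonneg_left (hD _ l hl) (by positivity)
      _ ≤ ((2 : ℝ) ^ n)⁻¹ * ((2 * L) ^ n * φ x x) := by
          apply mul_le_mul_of_nonneg_left (hiter n) (by positivity)
      _ = L ^ n * φ x x := by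
          rw [mul_pow]; field_simp
  have hto0 : Tendsto seq atTop (𝓝 0) := by
    apply squeeze_zero_norm hnorm
    have := (tendsto_pow_atTop_nhds_zero_of_lt_one hL0.le hL1).mul_const (φ x x)
    simpa using this
  -- rewrite seq as a difference of converging sequences
  have hseq' : seq = fun n =>
      (2 * (starRingEnd ℂ) l) • (((2 : ℂ) ^ n)⁻¹ • f ((2 : ℂ) ^ n • x))
      - (2 : ℂ) • (((2 : ℂ) ^ n)⁻¹ • f ((2 : ℂ) ^ n • (l • x))) := by
    funext n
    show ((2 : ℂ) ^ n)⁻¹ • ((2 * (starRingEnd ℂ) l) • f ((2 : ℂ) ^ n • x)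
      - (2 : ℂ) • f (l • ((2 : ℂ) ^ n • x))) = _
    rw [smul_sub, smul_comm, smul_comm ((2 : ℂ) ^ n)⁻¹ (2 : ℂ), smul_comm l]
  have hlim : Tendsto seq atTop
      (𝓝 ((2 * (starRingEnd ℂ) l) • I x - (2 : ℂ) • I (l • x))) := by
    rw [hseq']
    exact ((hI x).const_smul _).sub ((hI (l • x)).const_smul _)
  have heq : (2 * (starRingEnd ℂ) l) • I x - (2 : ℂ) • I (l • x) = 0 :=
    tendsto_nhds_unique hlim hto0
  have h2 : (2 : ℂ) • ((starRingEnd ℂ) l • I x) = (2 : ℂ) • I (l • x) := by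
    rw [smul_smul]
    rw [sub_eq_zero] at heq
    exact heq
  have := smul_right_injective E (two_ne_zero (α := ℂ)) h2
  exact this.symm
end

section
/- Let E be a complex Banach algebra, L a constant with 0 < L < 1, and φ : E × E → [0,∞) a function satisfying φ(2x, 2y) ≤ 2L·φ(x, y) for all x, y ∈ E. Suppose f : E → E satisfies ‖f(xy) − f(y)·f(x)‖ ≤ φ(x, y) for all x, y ∈ E, and that for each x ∈ E the limit I(x) = lim_{n→∞} 2^{−n} f(2^n x) exists. Then I(xy) = I(y)·I(x) for all x, y ∈ E. -/
open Filter Topology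

theorem anti_multiplicative_limit {E : Type*} [NormedRing E] [NormedAlgebra ℂ E]
    [CompleteSpace E]
    (L : ℝ) (hL0 : 0 < L) (hL1 : L < 1)
    (φ : E → E → ℝ) (hφ0 : ∀ x y : E, 0 ≤ φ x y)
    (hφ : ∀ x y : E, φ ((2 : ℂ) • x) ((2 : ℂ) • y) ≤ 2 * L * φ x y)
    (f : E → E)
    (hmul : ∀ x y : E, ‖f (x * y) - f y * f x‖ ≤ φ x y)
    (I : E → E)
    (hI : ∀ x : E,
      Tendsto (fun n : ℕ => ((2 : ℂ) ^ n)⁻¹ • f ((2 : ℂ) ^ n • x)) atTop (𝓝 (I x))) :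
    ∀ x y : E, I (x * y) = I y * I x := by
  intro x y
  -- iterated φ bound
  have hφn : ∀ (n : ℕ) (x y : E), φ ((2 : ℂ) ^ n • x) ((2 : ℂ) ^ n • y) ≤ (2 * L) ^ n * φ x y := by
    intro n
    induction n with
    | zero => intro x y; simp
    | succ n ih =>
      intro x y
      have h1 : (2 : ℂ) ^ (n + 1) • x = (2 : ℂ) ^ n • ((2 : ℂ) • x) := by
        rw [smul_smul, ← pow_succ]
      have h2 : (2 : ℂ) ^ (n + 1) • y = (2 : ℂ) ^ n • ((2 : ℂ) • y) := by
        rw [smul_smul, ← pow_succ]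
      rw [h1, h2]
      calc φ ((2 : ℂ) ^ n • ((2 : ℂ) • x)) ((2 : ℂ) ^ n • ((2 : ℂ) • y))
          ≤ (2 * L) ^ n * φ ((2 : ℂ) • x) ((2 : ℂ) • y) := ih _ _
        _ ≤ (2 * L) ^ n * (2 * L * φ x y) := by
            apply mul_le_mul_of_nonneg_left (hφ x y)
            positivity
        _ = (2 * L) ^ (n + 1) * φ x y := by ring
  -- subsequence limit for x*y
  have h2n : Tendsto (fun n : ℕ => 2 * n) atTop atTop :=
    tendsto_atTop_atTop_of_monotone (fun a b h => by omega) (fun b => ⟨b, by omega⟩)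
  have ha : Tendsto (fun n : ℕ => ((2 : ℂ) ^ (2 * n))⁻¹ • f ((2 : ℂ) ^ (2 * n) • (x * y)))
      atTop (𝓝 (I (x * y))) := (hI (x * y)).comp h2n
  have hb : Tendsto (fun n : ℕ => (((2 : ℂ) ^ n)⁻¹ • f ((2 : ℂ) ^ n • y)) *
      (((2 : ℂ) ^ n)⁻¹ • f ((2 : ℂ) ^ n • x))) atTop (𝓝 (I y * I x)) := (hI y).mul (hI x)
  -- the difference tends to 0
  have hdiff : Tendsto (fun n : ℕ => ((2 : ℂ) ^ (2 * n))⁻¹ • f ((2 : ℂ) ^ (2 * n) • (x * y)) -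
      (((2 : ℂ) ^ n)⁻¹ • f ((2 : ℂ) ^ n • y)) * (((2 : ℂ) ^ n)⁻¹ • f ((2 : ℂ) ^ n • x)))
      atTop (𝓝 0) := by
    apply squeeze_zero_norm (a := fun n : ℕ => (L / 2) ^ n * φ x y)
    · intro n
      have hxy : (2 : ℂ) ^ (2 * n) • (x * y) = ((2 : ℂ) ^ n • x) * ((2 : ℂ) ^ n • y) := by
        rw [smul_mul_smul_comm, ← pow_add, two_mul]
      have hprod : (((2 : ℂ) ^ n)⁻¹ • f ((2 : ℂ) ^ n • y)) * (((2 : ℂ) ^ n)⁻¹ • f ((2 : ℂ) ^ n • x))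
          = ((2 : ℂ) ^ (2 * n))⁻¹ • (f ((2 : ℂ) ^ n • y) * f ((2 : ℂ) ^ n • x)) := by
        rw [smul_mul_smul_comm, ← mul_inv, ← pow_add, two_mul]
      rw [hxy, hprod, ← smul_sub, norm_smul]
      have hnorm : ‖((2 : ℂ) ^ (2 * n))⁻¹‖ = ((2 : ℝ) ^ (2 * n))⁻¹ := by
        simp [norm_inv, norm_pow]
      rw [hnorm]
      calc ((2 : ℝ) ^ (2 * n))⁻¹ *
            ‖f (((2 : ℂ) ^ n • x) * ((2 : ℂ) ^ n • y)) - f ((2 : ℂ) ^ n • y) * f ((2 : ℂ) ^ n • x)‖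
          ≤ ((2 : ℝ) ^ (2 * n))⁻¹ * φ ((2 : ℂ) ^ n • x) ((2 : ℂ) ^ n • y) := by
            apply mul_le_mul_of_nonneg_left (hmul _ _)
            positivity
        _ ≤ ((2 : ℝ) ^ (2 * n))⁻¹ * ((2 * L) ^ n * φ x y) := by
            apply mul_le_mul_of_nonneg_left (hφn n x y)
            positivity
        _ = (L / 2) ^ n * φ x y := by
            have h4 : (2 : ℝ) ^ (2 * n) = 4 ^ n := by rw [pow_mul]; norm_num
            rw [h4, div_pow, mul_pow]
            field_simp
            ring_nf
            rw [pow_mul']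
            norm_num
    · have : Tendsto (fun n : ℕ => (L / 2) ^ n) atTop (𝓝 0) := by
        apply tendsto_pow_atTop_nhds_zero_of_lt_one (by positivity) (by linarith)
      simpa using this.mul_const (φ x y)
  have := hdiff.add hb
  simp only [sub_add_cancel, zero_add] at this
  exact tendsto_nhds_unique ha this
end
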